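/- arXiv:2510.15573 — 3 statements merged into one kernel-verified Lean document; each statement's English description precedes it below -/
import Mathlib

section
/- Let H be a real inner product space, K ⊆ H, F₁, F₂ : H → H, and μ > 0, and suppose F₁ is μ-strongly monotone on K. If s₁ ∈ K is a solution of the variational inequality VI(F₁, K) and s₂ ∈ K is a solution of the variational inequality VI(F₂, K), then ‖s₁ − s₂‖ ≤ (1/μ) ‖F₁(s₂) − F₂(s₂)‖. -/
open scoped RealInnerProductSpace

/-- `x` is a solution of the variational inequality `VI(F, K)`:
`x ∈ K` and `⟪F x, s − x⟫ ≥ 0` for all `s ∈ K`. -/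
def VISol {H : Type*} [NormedAddCommGroup H] [InnerProductSpace ℝ H]
    (F : H → H) (K : Set H) (x : H) : Prop :=
  x ∈ K ∧ ∀ s ∈ K, 0 ≤ ⟪F x, s - x⟫

/-- `F` is `μ`-strongly monotone on `K`. -/
def StronglyMonotoneOn {H : Type*} [NormedAddCommGroup H] [InnerProductSpace ℝ H]
    (F : H → H) (K : Set H) (μ : ℝ) : Prop :=
  ∀ x ∈ K, ∀ y ∈ K, μ * ‖x - y‖ ^ 2 ≤ ⟪F x - F y, x - y⟫

/-! Testing each variational inequality at the other solution and adding the two bounds the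
monotonicity gap of `F₁` at `s₁, s₂` by the perturbation `F₁ s₂ - F₂ s₂` paired with
`s₂ - s₁`; strong monotonicity and Cauchy–Schwarz then give `μ ‖s₁ - s₂‖² ≤ ‖F₁ s₂ - F₂ s₂‖ ‖s₁ - s₂‖`. -/

theorem VISol.inner_sub_le_inner_sub {H : Type*} [NormedAddCommGroup H]
    [InnerProductSpace ℝ H] {F₁ F₂ : H → H} {K : Set H} {s₁ s₂ : H}
    (h₁ : VISol F₁ K s₁) (h₂ : VISol F₂ K s₂) :
    ⟪F₁ s₁ - F₁ s₂, s₁ - s₂⟫ ≤ ⟪F₁ s₂ - F₂ s₂, s₂ - s₁⟫ := by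
  have h₁₂ := h₁.2 s₂ h₂.1
  have h₂₁ := h₂.2 s₁ h₁.1
  have split : ⟪F₁ s₁ - F₁ s₂, s₁ - s₂⟫
      = -⟪F₁ s₁, s₂ - s₁⟫ - ⟪F₂ s₂, s₁ - s₂⟫ + ⟪F₁ s₂ - F₂ s₂, s₂ - s₁⟫ := by
    simp only [inner_sub_left, inner_sub_right]
    ring
  linarith

theorem le_one_div_mul_of_mul_sq_le_mul {μ x c : ℝ} (hμ : 0 < μ) (hc : 0 ≤ c)
    (hx : 0 ≤ x) (h : μ * x ^ 2 ≤ c * x) : x ≤ 1 / μ * c := by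
  rw [one_div_mul_eq_div, le_div_iff₀ hμ]
  rcases hx.eq_or_lt with rfl | hx
  · simpa using hc
  · nlinarith

/-- Perturbation bound for variational inequalities: if `F₁` is `μ`-strongly monotone on
`K`, `s₁` solves `VI(F₁, K)` and `s₂` solves `VI(F₂, K)`, then
`‖s₁ − s₂‖ ≤ (1/μ) ‖F₁(s₂) − F₂(s₂)‖`. -/
theorem VISol_perturbation {H : Type*} [NormedAddCommGroup H] [InnerProductSpace ℝ H]
    (K : Set H) (F₁ F₂ : H → H) (μ : ℝ) (hμ : 0 < μ)
    (hmono : StronglyMonotoneOn F₁ K μ)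
    (s₁ s₂ : H) (h₁ : VISol F₁ K s₁) (h₂ : VISol F₂ K s₂) :
    ‖s₁ - s₂‖ ≤ (1 / μ) * ‖F₁ s₂ - F₂ s₂‖ := by
  have cauchy_schwarz : ⟪F₁ s₂ - F₂ s₂, s₂ - s₁⟫ ≤ ‖F₁ s₂ - F₂ s₂‖ * ‖s₁ - s₂‖ := by
    rw [norm_sub_rev s₁ s₂]
    exact real_inner_le_norm _ _
  have key : μ * ‖s₁ - s₂‖ ^ 2 ≤ ‖F₁ s₂ - F₂ s₂‖ * ‖s₁ - s₂‖ :=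
    ((hmono s₁ h₁.1 s₂ h₂.1).trans (h₁.inner_sub_le_inner_sub h₂)).trans cauchy_schwarz
  exact le_one_div_mul_of_mul_sq_le_mul hμ (norm_nonneg _) (norm_nonneg _) key
end

section
/- Let m ∈ ℕ, let r ∈ ℝ^m (Euclidean space with the standard inner product), let θ_min > 0 and R ≥ 0, and let K ⊆ ℝ^m be a set contained in the closed ball of radius R centered at r. Let d, d' ∈ ℝ^m have all entries ≥ θ_min. If s ∈ K solves the variational inequality VI(F_{d,r}, K) and s' ∈ K solves VI(F_{d',r}, K), then ‖s − s'‖ ≤ (R/θ_min) ‖d − d'‖. -/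
open scoped RealInnerProductSpace

/-- The diagonal-affine operator `F_{d,r}(x)_i = d_i (x_i - r_i)`. -/
noncomputable def Fdr {m : ℕ} (d r : EuclideanSpace ℝ (Fin m)) :
    EuclideanSpace ℝ (Fin m) → EuclideanSpace ℝ (Fin m) :=
  fun x => WithLp.toLp 2 (fun i => d i * (x i - r i))

/-! Stability of strongly monotone variational inequalities: adding the two variational
inequalities for `s` and `s'` and using that `F_{d,r}` is `θmin`-strongly monotone gives
`θmin ‖s - s'‖ ≤ ‖F_{d,r}(s') - F_{d',r}(s')‖`. That residual is the componentwise product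
of `d - d'` with `s' - r`, whose norm is at most `‖d - d'‖ ‖s' - r‖ ≤ ‖d - d'‖ R`. -/

theorem EuclideanSpace.norm_toLp_mul_le {ι : Type*} [Fintype ι] (a b : EuclideanSpace ℝ ι) :
    ‖WithLp.toLp 2 (fun i => a i * b i)‖ ≤ ‖a‖ * ‖b‖ := by
  refine (sq_le_sq₀ (norm_nonneg _) (by positivity)).mp ?_
  rw [mul_pow, EuclideanSpace.real_norm_sq_eq, EuclideanSpace.real_norm_sq_eq, Finset.sum_mul]
  refine Finset.sum_le_sum fun i _ => ?_
  rw [mul_pow]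
  refine mul_le_mul_of_nonneg_left ?_ (sq_nonneg _)
  simpa only [sq_abs, Real.norm_eq_abs] using
    pow_le_pow_left₀ (norm_nonneg _) (b.norm_apply_le i) 2

section StrongMonotonicity

variable {H : Type*} [NormedAddCommGroup H] [InnerProductSpace ℝ H]

def IsStronglyMonotone (θ : ℝ) (F : H → H) : Prop :=
  ∀ u v, θ * ‖u - v‖ ^ 2 ≤ ⟪F u - F v, u - v⟫

variable {F G : H → H} {K : Set H} {x y : H}

theorem VISol.inner_sub_nonpos (hx : VISol F K x) (hy : VISol G K y) :
    ⟪F x - G y, x - y⟫ ≤ 0 := by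
  have hxy := hx.2 y hy.1
  have hyx := hy.2 x hx.1
  rw [← neg_sub x y, inner_neg_right] at hxy
  rw [inner_sub_left]
  linarith

theorem VISol.mul_norm_sub_le {θ : ℝ} (hF : IsStronglyMonotone θ F)
    (hx : VISol F K x) (hy : VISol G K y) : θ * ‖x - y‖ ≤ ‖F y - G y‖ := by
  have key : θ * ‖x - y‖ ^ 2 ≤ ‖F y - G y‖ * ‖x - y‖ :=
    calc θ * ‖x - y‖ ^ 2 ≤ ⟪F x - F y, x - y⟫ := hF x y
      _ = ⟪F x - G y, x - y⟫ + ⟪G y - F y, x - y⟫ := by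
        rw [← inner_add_left, sub_add_sub_cancel]
      _ ≤ 0 + ‖G y - F y‖ * ‖x - y‖ :=
        add_le_add (hx.inner_sub_nonpos hy) (real_inner_le_norm _ _)
      _ = ‖F y - G y‖ * ‖x - y‖ := by rw [zero_add, norm_sub_rev]
  rcases (norm_nonneg (x - y)).eq_or_lt with hzero | hpos
  · rw [← hzero, mul_zero]
    exact norm_nonneg _
  · rw [sq, ← mul_assoc] at key
    exact le_of_mul_le_mul_right key hpos

end StrongMonotonicity

theorem isStronglyMonotone_Fdr {m : ℕ} {θ : ℝ} {d : EuclideanSpace ℝ (Fin m)}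
    (hd : ∀ i, θ ≤ d i) (r : EuclideanSpace ℝ (Fin m)) : IsStronglyMonotone θ (Fdr d r) := by
  intro x y
  rw [EuclideanSpace.real_norm_sq_eq, Finset.mul_sum, PiLp.inner_apply]
  refine Finset.sum_le_sum fun i _ => ?_
  have hcoord : ⟪(Fdr d r x - Fdr d r y) i, (x - y) i⟫ = d i * (x i - y i) ^ 2 := by
    simp only [Fdr, PiLp.sub_apply, Real.inner_apply]
    ring
  rw [hcoord, PiLp.sub_apply]
  exact mul_le_mul_of_nonneg_right (hd i) (sq_nonneg _)

theorem norm_Fdr_sub_Fdr_le {m : ℕ} (d d' r x : EuclideanSpace ℝ (Fin m)) :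
    ‖Fdr d r x - Fdr d' r x‖ ≤ ‖d - d'‖ * ‖x - r‖ := by
  have hprod : Fdr d r x - Fdr d' r x = WithLp.toLp 2 (fun i => (d - d') i * (x - r) i) := by
    ext i
    simp only [Fdr, PiLp.sub_apply]
    ring
  rw [hprod]
  exact EuclideanSpace.norm_toLp_mul_le _ _

theorem Fdr_VISol_param_bound_general {m : ℕ} (r : EuclideanSpace ℝ (Fin m))
    (θmin R : ℝ) (hθ : 0 < θmin)
    (K : Set (EuclideanSpace ℝ (Fin m))) (hK : K ⊆ Metric.closedBall r R)
    (d d' : EuclideanSpace ℝ (Fin m))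
    (hd : ∀ i, θmin ≤ d i)
    (s s' : EuclideanSpace ℝ (Fin m))
    (hs : VISol (Fdr d r) K s) (hs' : VISol (Fdr d' r) K s') :
    ‖s - s'‖ ≤ (R / θmin) * ‖d - d'‖ := by
  have hs'r : ‖s' - r‖ ≤ R := mem_closedBall_iff_norm.mp (hK hs'.1)
  rw [div_mul_eq_mul_div, le_div_iff₀ hθ, mul_comm]
  calc θmin * ‖s - s'‖ ≤ ‖Fdr d r s' - Fdr d' r s'‖ :=
        hs.mul_norm_sub_le (isStronglyMonotone_Fdr hd r) hs'
    _ ≤ ‖d - d'‖ * ‖s' - r‖ := norm_Fdr_sub_Fdr_le d d' r s'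
    _ ≤ R * ‖d - d'‖ := by rw [mul_comm]; gcongr

/-- If `K` is contained in the closed ball of radius `R` about `r` and all entries of
`d, d'` are at least `θmin > 0`, then the variational-inequality solutions for
`F_{d,r}` and `F_{d',r}` over `K` satisfy `‖s − s'‖ ≤ (R/θmin) ‖d − d'‖`. -/
theorem Fdr_VISol_param_bound {m : ℕ} (r : EuclideanSpace ℝ (Fin m))
    (θmin R : ℝ) (hθ : 0 < θmin) (hR : 0 ≤ R)
    (K : Set (EuclideanSpace ℝ (Fin m))) (hK : K ⊆ Metric.closedBall r R)
    (d d' : EuclideanSpace ℝ (Fin m))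
    (hd : ∀ i, θmin ≤ d i) (hd' : ∀ i, θmin ≤ d' i)
    (s s' : EuclideanSpace ℝ (Fin m))
    (hs : VISol (Fdr d r) K s) (hs' : VISol (Fdr d' r) K s') :
    ‖s - s'‖ ≤ (R / θmin) * ‖d - d'‖ :=
  Fdr_VISol_param_bound_general r θmin R hθ K hK d d' hd s s' hs hs'
end

section
/- Let n, m ∈ ℕ, let E = Π_{i ∈ Fin n} ℝ^m carry the product (L²) inner product, let K ⊆ E be nonempty, closed, and convex, and for each i let d_i, r_i ∈ ℝ^m with θ_min ≤ (d_i)_j ≤ θ_max for all j, where 0 < θ_min ≤ θ_max. Define the pseudo-gradient F : E → E blockwise by F(s)_i = d_i ∘ (s_i − r_i). Then: (1) there exists a unique s* ∈ K with ⟨F(s*), s − s*⟩ ≥ 0 for all s ∈ K (a variational equilibrium); and (2) this s* is a generalized Nash equilibrium of the game with costs J_i(s_i) = (1/2) Σ_j (d_i)_j ((s_i)_j − (r_i)_j)², i.e., for every i and every t ∈ ℝ^m such that replacing the i-th component of s* by t yields a profile in K, J_i(s*_i) ≤ J_i(t). -/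
/-!
With `T` the diagonal scaling by `√d`, the pseudo-gradient satisfies `⟪F s, v⟫ = ⟪T (s - r), T v⟫`.
Hence the variational inequality on `K` is the optimality condition for the projection of `T r`
onto the closed convex set `T '' K`, which exists, and any two solutions `s, s'` satisfy
`‖T (s - s')‖² = ⟪F s - F s', s - s'⟫ ≤ 0`. Testing the inequality against a unilateral deviation
of player `i` gives `⟪F s i, t - s i⟫ ≥ 0`, and the convex quadratic `J i`, whose gradient at
`s i` is `F s i`, lies above its tangent.
-/

open scoped RealInnerProductSpace

section VariationalInequality

variable {E : Type*} [NormedAddCommGroup E] [InnerProductSpace ℝ E]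

def IsVISolution (K : Set E) (F : E → E) (x : E) : Prop :=
  x ∈ K ∧ ∀ y ∈ K, 0 ≤ ⟪F x, y - x⟫

theorem IsVISolution.eq_of_strictMono {K : Set E} {F : E → E}
    (hF : ∀ x y, x ≠ y → 0 < ⟪F x - F y, x - y⟫) {x y : E}
    (hx : IsVISolution K F x) (hy : IsVISolution K F y) : x = y := by
  by_contra hne
  have hxy := hx.2 y hy.1
  have hyx := hy.2 x hx.1
  have hmono := hF x y hne
  rw [inner_sub_left] at hmono
  rw [← neg_sub x y, inner_neg_right] at hxy
  linarith

theorem exists_isVISolution_of_inner_eq [CompleteSpace E] {K : Set E} (hKne : K.Nonempty)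
    (hKcl : IsClosed K) (hKconv : Convex ℝ K) (T : E ≃L[ℝ] E) (a : E) {F : E → E}
    (hF : ∀ x v, ⟪F x, v⟫ = ⟪T (x - a), T v⟫) : ∃ x, IsVISolution K F x := by
  have hTKcl : IsClosed (T '' K) := by
    rw [T.image_eq_preimage_symm]
    exact hKcl.preimage T.symm.continuous
  have hTKconv : Convex ℝ (T '' K) := hKconv.linear_image (T : E →ₗ[ℝ] E)
  obtain ⟨_, ⟨x, hxK, rfl⟩, hmin⟩ :=
    exists_norm_eq_iInf_of_complete_convex (hKne.image T) hTKcl.isComplete hTKconv (T a)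
  have hproj := (norm_eq_iInf_iff_real_inner_le_zero hTKconv ⟨x, hxK, rfl⟩).1 hmin
  refine ⟨x, hxK, fun y hy => ?_⟩
  have hy' := hproj (T y) ⟨y, hy, rfl⟩
  rw [hF, map_sub, map_sub, ← neg_sub (T a), inner_neg_left]
  linarith

theorem existsUnique_isVISolution_of_inner_eq [CompleteSpace E] {K : Set E} (hKne : K.Nonempty)
    (hKcl : IsClosed K) (hKconv : Convex ℝ K) (T : E ≃L[ℝ] E) (a : E) {F : E → E}
    (hF : ∀ x v, ⟪F x, v⟫ = ⟪T (x - a), T v⟫) : ∃! x, IsVISolution K F x := by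
  obtain ⟨x, hx⟩ := exists_isVISolution_of_inner_eq hKne hKcl hKconv T a hF
  refine ⟨x, hx, fun y hy => hy.eq_of_strictMono (fun u v huv => ?_) hx⟩
  have hTuv : T (u - v) ≠ 0 := by simpa [sub_eq_zero] using huv
  calc 0 < ‖T (u - v)‖ ^ 2 := by positivity
    _ = ⟪F u - F v, u - v⟫ := by
      rw [inner_sub_left, hF, hF, ← inner_sub_left, ← map_sub, sub_sub_sub_cancel_right,
        real_inner_self_eq_norm_sq]

end VariationalInequality

section Game

variable {ι : Type*} [Fintype ι] [DecidableEq ι] {β : ι → Type*}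
  [∀ i, NormedAddCommGroup (β i)] [∀ i, InnerProductSpace ℝ (β i)]

theorem PiLp.inner_toLp_update_sub (x s : PiLp 2 β) (i : ι) (t : β i) :
    ⟪x, WithLp.toLp 2 (Function.update s i t) - s⟫ = ⟪x i, t - s i⟫ := by
  rw [PiLp.inner_apply, Finset.sum_eq_single i]
  · simp
  · intro k _ hk
    simp [Function.update_of_ne hk]
  · simp

theorem IsVISolution.le_of_update_mem {K : Set (PiLp 2 β)} {F : PiLp 2 β → PiLp 2 β}
    {s : PiLp 2 β} (hs : IsVISolution K F s) {J : ∀ i, β i → ℝ}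
    (hJ : ∀ i t, J i (s i) + ⟪F s i, t - s i⟫ ≤ J i t) {i : ι} {t : β i}
    (hmem : WithLp.toLp 2 (Function.update s i t) ∈ K) : J i (s i) ≤ J i t := by
  have hVI := hs.2 _ hmem
  rw [PiLp.inner_toLp_update_sub] at hVI
  linarith [hJ i t]

end Game

section Diagonal

variable {ι κ : Type*} [Fintype κ]

theorem EuclideanSpace.real_inner_eq_sum (u v : EuclideanSpace ℝ κ) :
    ⟪u, v⟫ = ∑ j, u j * v j := by
  simp [PiLp.inner_apply, mul_comm]

theorem PiLp.real_inner_euclidean_eq_sum [Fintype ι]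
    (x y : PiLp 2 (fun _ : ι => EuclideanSpace ℝ κ)) :
    ⟪x, y⟫ = ∑ i, ∑ j, x i j * y i j := by
  rw [PiLp.inner_apply]
  simp only [EuclideanSpace.real_inner_eq_sum]

theorem half_sum_mul_sq_add_sum_le (d r x t : κ → ℝ) (hd : ∀ j, 0 ≤ d j) :
    (1 / 2) * ∑ j, d j * (x j - r j) ^ 2 + ∑ j, d j * (x j - r j) * (t j - x j)
      ≤ (1 / 2) * ∑ j, d j * (t j - r j) ^ 2 := by
  have hgap : 0 ≤ (1 / 2) * ∑ j, d j * (t j - x j) ^ 2 :=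
    mul_nonneg (by norm_num) (Finset.sum_nonneg fun j _ => mul_nonneg (hd j) (sq_nonneg _))
  have hexp : (1 / 2) * ∑ j, d j * (t j - r j) ^ 2 = (1 / 2) * ∑ j, d j * (x j - r j) ^ 2
      + ∑ j, d j * (x j - r j) * (t j - x j) + (1 / 2) * ∑ j, d j * (t j - x j) ^ 2 := by
    have hterm : ∀ j, d j * (t j - r j) ^ 2 = d j * (x j - r j) ^ 2
        + 2 * (d j * (x j - r j) * (t j - x j)) + d j * (t j - x j) ^ 2 := fun j => by ring
    simp only [hterm, Finset.sum_add_distrib, ← Finset.mul_sum]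
    ring
  linarith

noncomputable def diagScale (c : ι → κ → ℝ) (hc : ∀ i j, c i j ≠ 0) :
    PiLp 2 (fun _ : ι => EuclideanSpace ℝ κ) ≃L[ℝ] PiLp 2 (fun _ : ι => EuclideanSpace ℝ κ) where
  toFun x := WithLp.toLp 2 fun i => WithLp.toLp 2 fun j => c i j * x i j
  invFun x := WithLp.toLp 2 fun i => WithLp.toLp 2 fun j => (c i j)⁻¹ * x i j
  map_add' x y := by ext i j; simp [mul_add]
  map_smul' a x := by ext i j; simp [mul_left_comm]
  left_inv x := by ext i j; simp [hc]
  right_inv x := by ext i j; simp [hc]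
  continuous_toFun := by fun_prop
  continuous_invFun := by fun_prop

@[simp]
theorem diagScale_apply (c : ι → κ → ℝ) (hc : ∀ i j, c i j ≠ 0)
    (x : PiLp 2 (fun _ : ι => EuclideanSpace ℝ κ)) (i : ι) (j : κ) :
    diagScale c hc x i j = c i j * x i j :=
  rfl

theorem inner_diagScale_sqrt [Fintype ι] (d : ι → κ → ℝ) (hd : ∀ i j, 0 < d i j)
    (x y : PiLp 2 (fun _ : ι => EuclideanSpace ℝ κ)) :
    ⟪diagScale (fun i j => √(d i j)) (fun i j => (Real.sqrt_pos.2 (hd i j)).ne') x,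
      diagScale (fun i j => √(d i j)) (fun i j => (Real.sqrt_pos.2 (hd i j)).ne') y⟫
      = ∑ i, ∑ j, d i j * x i j * y i j := by
  simp only [PiLp.real_inner_euclidean_eq_sum, diagScale_apply]
  refine Finset.sum_congr rfl fun i _ => Finset.sum_congr rfl fun j _ => ?_
  linear_combination (x i j * y i j) * Real.mul_self_sqrt (hd i j).le

end Diagonal

theorem trajectoryGame_VE_exists_unique_and_GNE_general (n m : ℕ)
    (K : Set (PiLp 2 (fun _ : Fin n => EuclideanSpace ℝ (Fin m))))
    (hKne : K.Nonempty) (hKcl : IsClosed K) (hKconv : Convex ℝ K)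
    (θmin θmax : ℝ) (hθmin : 0 < θmin)
    (d r : Fin n → EuclideanSpace ℝ (Fin m))
    (hd : ∀ i j, θmin ≤ d i j ∧ d i j ≤ θmax)
    (F : PiLp 2 (fun _ : Fin n => EuclideanSpace ℝ (Fin m)) →
         PiLp 2 (fun _ : Fin n => EuclideanSpace ℝ (Fin m)))
    (hF : ∀ s i j, F s i j = d i j * (s i j - r i j))
    (J : Fin n → EuclideanSpace ℝ (Fin m) → ℝ)
    (hJ : ∀ i x, J i x = (1 / 2) * ∑ j, d i j * (x j - r i j) ^ 2) :
    ∃ sstar ∈ K,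
      (∀ s ∈ K, 0 ≤ ⟪F sstar, s - sstar⟫) ∧
      (∀ s' ∈ K, (∀ s ∈ K, 0 ≤ ⟪F s', s - s'⟫) → s' = sstar) ∧
      (∀ (i : Fin n) (t : EuclideanSpace ℝ (Fin m)),
        WithLp.toLp 2 (Function.update sstar i t) ∈ K → J i (sstar i) ≤ J i t) := by
  have hdpos : ∀ i j, 0 < d i j := fun i j => hθmin.trans_le (hd i j).1
  set T := diagScale (fun i j => √(d i j)) fun i j => (Real.sqrt_pos.2 (hdpos i j)).ne'
  have hFT : ∀ x v, ⟪F x, v⟫ = ⟪T (x - WithLp.toLp 2 r), T v⟫ := by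
    intro x v
    rw [inner_diagScale_sqrt (fun i j => d i j) hdpos, PiLp.real_inner_euclidean_eq_sum]
    simp [hF]
  obtain ⟨sstar, hsol, huniq⟩ := existsUnique_isVISolution_of_inner_eq hKne hKcl hKconv T _ hFT
  refine ⟨sstar, hsol.1, hsol.2, fun s' hs' hVI => huniq s' ⟨hs', hVI⟩,
    fun i t hmem => hsol.le_of_update_mem (fun k u => ?_) hmem⟩
  rw [hJ, hJ, EuclideanSpace.real_inner_eq_sum]
  simpa [hF, mul_assoc] using
    half_sum_mul_sq_add_sum_le (fun j => d k j) (fun j => r k j) (fun j => sstar k j) (fun j => u j)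
      fun j => (hdpos k j).le

/-- Existence and uniqueness of the variational equilibrium of the trajectory-planning
game with quadratic tracking costs and diagonal weights bounded in `[θmin, θmax]`,
`0 < θmin ≤ θmax`, over a nonempty closed convex coupled constraint set `K`; moreover
this variational equilibrium is a generalized Nash equilibrium of the game. -/
theorem trajectoryGame_VE_exists_unique_and_GNE (n m : ℕ)
    (K : Set (PiLp 2 (fun _ : Fin n => EuclideanSpace ℝ (Fin m))))
    (hKne : K.Nonempty) (hKcl : IsClosed K) (hKconv : Convex ℝ K)
    (θmin θmax : ℝ) (hθmin : 0 < θmin) (hθ : θmin ≤ θmax)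
    (d r : Fin n → EuclideanSpace ℝ (Fin m))
    (hd : ∀ i j, θmin ≤ d i j ∧ d i j ≤ θmax)
    (F : PiLp 2 (fun _ : Fin n => EuclideanSpace ℝ (Fin m)) →
         PiLp 2 (fun _ : Fin n => EuclideanSpace ℝ (Fin m)))
    (hF : ∀ s i j, F s i j = d i j * (s i j - r i j))
    (J : Fin n → EuclideanSpace ℝ (Fin m) → ℝ)
    (hJ : ∀ i x, J i x = (1 / 2) * ∑ j, d i j * (x j - r i j) ^ 2) :
    ∃ sstar ∈ K,
      (∀ s ∈ K, 0 ≤ ⟪F sstar, s - sstar⟫) ∧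
      (∀ s' ∈ K, (∀ s ∈ K, 0 ≤ ⟪F s', s - s'⟫) → s' = sstar) ∧
      (∀ (i : Fin n) (t : EuclideanSpace ℝ (Fin m)),
        WithLp.toLp 2 (Function.update sstar i t) ∈ K → J i (sstar i) ≤ J i t) :=
  trajectoryGame_VE_exists_unique_and_GNE_general n m K hKne hKcl hKconv θmin θmax hθmin d r hd F hF
    J hJ
end
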